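/- Let f(x,k) = f_{r-1} ∘ f_{r-2} ∘ ⋯ ∘ f_0(x,k) be a Boolean function as in the iterated-estimate setting, and let J ⊆ K ⊆ I ⊆ {0,…,n-1}. Then the iterated estimated vector degrees satisfy vdeg-hat^K ≼ vdeg-hat^I, i.e., for every w ∈ 𝔽₂^J, vdeg-hat^K(w) ≤ vdeg-hat^I(w). -/
import Mathlib


open Finset

section Core

variable {α : Type*}

/-- The monomial `x^u` over `𝔽₂`. -/
def monom [Fintype α] (u x : α → ZMod 2) : ZMod 2 :=
  ∏ i, if u i = 1 then x i else 1

/-- The ANF coefficient of the monomial `x^u` in `f`, via Möbius inversion. -/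
def anf [Fintype α] [DecidableEq α] (f : (α → ZMod 2) → ZMod 2) (u : α → ZMod 2) : ZMod 2 :=
  ∑ v ∈ Finset.univ.filter (fun v : α → ZMod 2 => ∀ i, v i = 1 → u i = 1), f v

/-- Hamming weight. -/
def wt [Fintype α] (u : α → ZMod 2) : ℕ :=
  (Finset.univ.filter (fun i => u i = 1)).card

/-- Algebraic degree, in `ℤ ∪ {-∞}`. -/
def deg [Fintype α] [DecidableEq α] (f : (α → ZMod 2) → ZMod 2) : WithBot ℤ :=
  (Finset.univ.filter (fun u : α → ZMod 2 => anf f u = 1)).sup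
    (fun u => ((wt u : ℤ) : WithBot ℤ))

/-- Combine an assignment on `I` with one on `Iᶜ` to a full assignment. -/
def combine [Fintype α] [DecidableEq α] (I : Finset α) (w : ↥I → ZMod 2)
    (y : ↥Iᶜ → ZMod 2) : α → ZMod 2 :=
  fun i => if h : i ∈ I then w ⟨i, h⟩ else y ⟨i, Finset.mem_compl.mpr h⟩

/-- The coefficient function `g_{f,w}` of `x_I^w` in `f`, a Boolean function of `x_{Iᶜ}`. -/
def coeffFun [Fintype α] [DecidableEq α] (f : (α → ZMod 2) → ZMod 2) (I : Finset α)
    (w : ↥I → ZMod 2) : (↥Iᶜ → ZMod 2) → ZMod 2 :=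
  fun y => ∑ t : ↥Iᶜ → ZMod 2, anf f (combine I w t) * monom t y

/-- The vector degree of `f` w.r.t. the index set `I`. -/
def vdeg [Fintype α] [DecidableEq α] (f : (α → ZMod 2) → ZMod 2) (I : Finset α)
    (w : ↥I → ZMod 2) : WithBot ℤ :=
  deg (coeffFun f I w)

/-- `f` with the variables outside `S` set to `0`. -/
def restrict0 [Fintype α] [DecidableEq α] (f : (α → ZMod 2) → ZMod 2) (S : Finset α) :
    (α → ZMod 2) → ZMod 2 :=
  fun x => f (fun i => if i ∈ S then x i else 0)

/-- Combine an assignment on `I₁` with one on `I₂ \ I₁` to an assignment on `I₂`. -/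
def joinFn [DecidableEq α] {I₁ I₂ : Finset α} (w : ↥I₁ → ZMod 2)
    (w' : ↥(I₂ \ I₁) → ZMod 2) : ↥I₂ → ZMod 2 :=
  fun j => if h : (j : α) ∈ I₁ then w ⟨(j : α), h⟩
           else w' ⟨(j : α), Finset.mem_sdiff.mpr ⟨j.2, h⟩⟩

end Core

/-- Coordinatewise OR of the family `W i`, over indices `i` with `u i = 1`. -/
def orFam {n : ℕ} {β : Type*} (u : Fin n → ZMod 2) (W : Fin n → β → ZMod 2) :
    β → ZMod 2 :=
  fun j => if ∃ i, u i = 1 ∧ W i j = 1 then 1 else 0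

/-- The vector numeric mapping `VDEG_d(f, V)`. -/
def VDEG {n : ℕ} {δ : Type*} [Fintype δ] [DecidableEq δ]
    (f : (Fin n → ZMod 2) → ZMod 2) (V : Fin n → (δ → ZMod 2) → WithBot ℤ)
    (w : δ → ZMod 2) : WithBot ℤ :=
  (Finset.univ.filter (fun p : (Fin n → ZMod 2) × (Fin n → δ → ZMod 2) =>
      anf f p.1 = 1 ∧ (∀ i, p.1 i = 0 → p.2 i = 0) ∧ w = orFam p.1 p.2)).sup
    (fun p => ∑ i ∈ Finset.univ.filter (fun i => p.1 i = 1), V i (p.2 i))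

/-- Monomial transition `π_u(x) → π_v(g(x))`. -/
def MonTrans {a b : ℕ} (g : (Fin a → ZMod 2) → (Fin b → ZMod 2))
    (u : Fin a → ZMod 2) (v : Fin b → ZMod 2) : Prop :=
  anf (fun x => monom v (g x)) u = 1

/-- Monomial trails from level `a` to level `b`, with fixed endpoints `u`, `v`
(trails are normalized to be `0` outside the levels `a, …, b`). -/
def Trails (n : ℕ → ℕ) (f : ∀ i, (Fin (n i) → ZMod 2) → (Fin (n (i + 1)) → ZMod 2))
    (a b : ℕ) (u : Fin (n a) → ZMod 2) (v : Fin (n b) → ZMod 2) :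
    Set (∀ i, Fin (n i) → ZMod 2) :=
  {t | t a = u ∧ t b = v ∧ (∀ i, a ≤ i → i < b → MonTrans (f i) (t i) (t (i + 1))) ∧
       (∀ i, i < a → t i = fun _ => 0) ∧ (∀ i, b < i → t i = fun _ => 0)}

/-- The iterated composition `f_{b-1} ∘ ⋯ ∘ f_a` (meaningful for `a ≤ b`). -/
def iterComp (n : ℕ → ℕ) (f : ∀ i, (Fin (n i) → ZMod 2) → (Fin (n (i + 1)) → ZMod 2))
    (a : ℕ) : (b : ℕ) → (Fin (n a) → ZMod 2) → (Fin (n b) → ZMod 2)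
  | 0 => fun x j => if h : a = 0 then x (Fin.cast (show n 0 = n a by rw [h]) j) else 0
  | b + 1 =>
      if h : a = b + 1 then fun x j => x (Fin.cast (show n (b + 1) = n a by rw [h]) j)
      else fun x => f b (iterComp n f a b x)

section Iterated

/-- Embed an index set `J ⊆ {0,…,n-1}` into the joint index set of size `n' 0 = n + m`. -/
def liftJ {n m N0 : ℕ} (h0 : N0 = n + m) (J : Finset (Fin n)) : Finset (Fin N0) :=
  J.image (fun (j : Fin n) => (⟨j.val, by have := j.isLt; omega⟩ : Fin N0))

/-- Set the `x`-variables outside `S` to zero in a joint assignment. -/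
def mask0 {n m N0 : ℕ} (h0 : N0 = n + m) (S : Finset (Fin n)) (z : Fin N0 → ZMod 2) :
    Fin N0 → ZMod 2 :=
  fun i => if h : (i : ℕ) < n then (if (⟨(i : ℕ), h⟩ : Fin n) ∈ S then z i else 0) else z i

/-- The iterated estimated vector degrees `V_t^S`. -/
def Vt {n m : ℕ} (n' : ℕ → ℕ) (h0 : n' 0 = n + m)
    (f : ∀ t, (Fin (n' t) → ZMod 2) → (Fin (n' (t + 1)) → ZMod 2))
    (J S : Finset (Fin n)) :
    (t : ℕ) → Fin (n' (t + 1)) → (↥(liftJ h0 J) → ZMod 2) → WithBot ℤ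
  | 0 => fun i => vdeg (fun z => f 0 (mask0 h0 S z) i) (liftJ h0 J)
  | t + 1 => fun i => VDEG (fun y => f (t + 1) y i) (Vt n' h0 f J S t)

/-- The estimated vector degree `vdeg-hat^S` (here `r = s + 2`). -/
def vdegHat {n m : ℕ} (n' : ℕ → ℕ) (h0 : n' 0 = n + m)
    (f : ∀ t, (Fin (n' t) → ZMod 2) → (Fin (n' (t + 1)) → ZMod 2))
    (J : Finset (Fin n)) (s : ℕ) (S : Finset (Fin n)) :
    (↥(liftJ h0 J) → ZMod 2) → WithBot ℤ :=
  VDEG (fun y => monom (fun _ => 1) (f (s + 1) y)) (Vt n' h0 f J S s)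

/-- The estimated degree `deg-hat^S`. -/
noncomputable def degHat {n m : ℕ} (n' : ℕ → ℕ) (h0 : n' 0 = n + m)
    (f : ∀ t, (Fin (n' t) → ZMod 2) → (Fin (n' (t + 1)) → ZMod 2))
    (J : Finset (Fin n)) (s : ℕ) (S : Finset (Fin n)) : WithBot ℤ :=
  Finset.univ.sup (fun w : ↥(liftJ h0 J) → ZMod 2 =>
    vdegHat n' h0 f J s S w + ((wt w : ℤ) : WithBot ℤ))

end Iterated

section AuxLemmas

variable {α : Type*} [Fintype α] [DecidableEq α]

lemma zmod2_cases : ∀ a : ZMod 2, a = 0 ∨ a = 1 := by decide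

lemma anf_flip_zero (u : α → ZMod 2) (j : α) (hj : u j = 1)
    (h : (α → ZMod 2) → ZMod 2)
    (hh : ∀ v, h (Function.update v j (v j + 1)) = h v) :
    anf h u = 0 := by
  unfold anf
  have g_mem : ∀ v ∈ Finset.univ.filter
      (fun v : α → ZMod 2 => ∀ i, v i = 1 → u i = 1),
      Function.update v j (v j + 1) ∈ Finset.univ.filter
        (fun v : α → ZMod 2 => ∀ i, v i = 1 → u i = 1) := by
    intro v hv
    simp only [Finset.mem_filter, Finset.mem_univ, true_and] at hv ⊢
    intro i hi
    rcases eq_or_ne i j with rfl | hne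
    · exact hj
    · exact hv i (by rwa [Function.update_of_ne hne] at hi)
  refine Finset.sum_involution (fun v _ => Function.update v j (v j + 1)) ?_ ?_ g_mem ?_
  · intro v _
    rw [hh]
    exact CharTwo.add_self_eq_zero _
  · intro v _ _
    intro hcon
    have h2 : Function.update v j (v j + 1) = v := hcon
    have := congrFun h2 j
    rw [Function.update_self] at this
    revert this
    rcases zmod2_cases (v j) with h' | h' <;> rw [h'] <;> decide
  · intro v hv
    show Function.update (Function.update v j (v j + 1)) j
        (Function.update v j (v j + 1) j + 1) = v
    funext i
    rcases eq_or_ne i j with rfl | hne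
    · simp only [Function.update_self]
      rcases zmod2_cases (v i) with h' | h' <;> rw [h'] <;> decide
    · simp only [Function.update_of_ne hne]

lemma monom_eq (t v : α → ZMod 2) :
    monom t v = if (∀ i, t i = 1 → v i = 1) then 1 else 0 := by
  unfold monom
  split
  · next h =>
    refine Finset.prod_eq_one fun i _ => ?_
    by_cases ht : t i = 1
    · simp [ht, h i ht]
    · simp [ht]
  · next h =>
    push_neg at h
    obtain ⟨i, hti, hvi⟩ := h
    refine Finset.prod_eq_zero (Finset.mem_univ i) ?_
    have hv0 : v i = 0 := by
      rcases zmod2_cases (v i) with h' | h'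
      · exact h'
      · exact absurd h' hvi
    simp [hti, hv0]

lemma anf_monom (u t : α → ZMod 2) :
    anf (monom t) u = if t = u then 1 else 0 := by
  by_cases htu : t = u
  · subst htu
    rw [if_pos rfl]
    unfold anf
    rw [Finset.sum_eq_single t]
    · rw [monom_eq, if_pos (fun i h => h)]
    · intro v hv hne
      rw [monom_eq, if_neg]
      intro hall
      apply hne
      funext i
      have hv' := (Finset.mem_filter.mp hv).2
      rcases zmod2_cases (v i) with h | h <;> rcases zmod2_cases (t i) with h' | h'
      · rw [h, h']
      · exact absurd (hall i h') (by rw [h]; decide)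
      · exact absurd (hv' i h) (by rw [h']; decide)
      · rw [h, h']
    · intro hc
      exact absurd (Finset.mem_filter.mpr ⟨Finset.mem_univ _, fun i h => h⟩) hc
  · rw [if_neg htu]
    by_cases hle : ∀ i, t i = 1 → u i = 1
    · have hex : ∃ j, u j = 1 ∧ t j ≠ 1 := by
        by_contra hc
        push_neg at hc
        apply htu
        funext i
        rcases zmod2_cases (t i) with h | h <;> rcases zmod2_cases (u i) with h' | h'
        · rw [h, h']
        · exact absurd (hc i h') (by rw [h]; decide)
        · exact absurd (hle i h) (by rw [h']; decide)
        · rw [h, h']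
      obtain ⟨j, huj, htj⟩ := hex
      refine anf_flip_zero u j huj _ fun v => ?_
      unfold monom
      refine Finset.prod_congr rfl fun i _ => ?_
      rcases eq_or_ne i j with rfl | hne
      · simp [htj]
      · rw [Function.update_of_ne hne]
    · unfold anf
      refine Finset.sum_eq_zero fun v hv => ?_
      rw [monom_eq, if_neg]
      intro hall
      exact hle fun i hti => (Finset.mem_filter.mp hv).2 i (hall i hti)

lemma anf_sum {β : Type*} (s : Finset β) (F : β → (α → ZMod 2) → ZMod 2)
    (u : α → ZMod 2) :
    anf (fun y => ∑ b ∈ s, F b y) u = ∑ b ∈ s, anf (F b) u := by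
  unfold anf
  rw [Finset.sum_comm]

lemma anf_smul (c : ZMod 2) (F : (α → ZMod 2) → ZMod 2) (u : α → ZMod 2) :
    anf (fun y => c * F y) u = c * anf F u := by
  unfold anf
  rw [Finset.mul_sum]

lemma anf_coeffFun (g : (α → ZMod 2) → ZMod 2) (I : Finset α) (w : ↥I → ZMod 2)
    (t : ↥Iᶜ → ZMod 2) : anf (coeffFun g I w) t = anf g (combine I w t) := by
  unfold coeffFun
  rw [anf_sum Finset.univ (fun t' y => anf g (combine I w t') * monom t' y) t]
  have : ∀ t' : ↥Iᶜ → ZMod 2,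
      anf (fun y => anf g (combine I w t') * monom t' y) t
        = anf g (combine I w t') * (if t' = t then 1 else 0) := by
    intro t'
    rw [anf_smul, anf_monom]
  rw [Finset.sum_congr rfl fun t' _ => this t']
  simp [Finset.sum_ite_eq']

lemma deg_mono {g h : (α → ZMod 2) → ZMod 2} (H : ∀ u, anf g u = 1 → anf h u = 1) :
    deg g ≤ deg h := by
  unfold deg
  refine Finset.sup_mono fun u hu => ?_
  simp only [Finset.mem_filter, Finset.mem_univ, true_and] at hu ⊢
  exact H u hu

end AuxLemmas

section MaskLemmas

lemma mask0_update {n m N0 : ℕ} (h0 : N0 = n + m) (S : Finset (Fin n)) (j : Fin N0)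
    (hjn : (j : ℕ) < n) (hjS : (⟨(j : ℕ), hjn⟩ : Fin n) ∉ S) (v : Fin N0 → ZMod 2) (c : ZMod 2) :
    mask0 h0 S (Function.update v j c) = mask0 h0 S v := by
  funext i
  unfold mask0
  rcases eq_or_ne i j with rfl | hne
  · rw [dif_pos hjn, dif_pos hjn, if_neg hjS, if_neg hjS]
  · rw [Function.update_of_ne hne]

lemma mask0_eq_self {n m N0 : ℕ} (h0 : N0 = n + m) (S : Finset (Fin n)) (v : Fin N0 → ZMod 2)
    (hv : ∀ (j : Fin N0) (hj : (j : ℕ) < n), (⟨(j : ℕ), hj⟩ : Fin n) ∉ S → v j = 0) :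
    mask0 h0 S v = v := by
  funext i
  unfold mask0
  by_cases hin : (i : ℕ) < n
  · rw [dif_pos hin]
    by_cases hiS : (⟨(i : ℕ), hin⟩ : Fin n) ∈ S
    · rw [if_pos hiS]
    · rw [if_neg hiS, hv i hin hiS]
  · rw [dif_neg hin]

lemma anf_mask {n m N0 : ℕ} (h0 : N0 = n + m) (K I : Finset (Fin n)) (hKI : K ⊆ I)
    (g : (Fin N0 → ZMod 2) → ZMod 2) (u : Fin N0 → ZMod 2)
    (h1 : anf (fun z => g (mask0 h0 K z)) u = 1) :
    anf (fun z => g (mask0 h0 I z)) u = 1 := by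
  by_cases hgood : ∀ (j : Fin N0) (hj : (j : ℕ) < n), (⟨(j : ℕ), hj⟩ : Fin n) ∉ K → u j = 0
  · rw [← h1]
    unfold anf
    refine (Finset.sum_congr rfl fun v hv => ?_).symm
    have hv' : ∀ i, v i = 1 → u i = 1 := by
      simp only [Finset.mem_filter, Finset.mem_univ, true_and] at hv
      exact hv
    have hvK : ∀ (j : Fin N0) (hj : (j : ℕ) < n), (⟨(j : ℕ), hj⟩ : Fin n) ∉ K → v j = 0 := by
      intro j hj hjK
      rcases zmod2_cases (v j) with h | h
      · exact h
      · exact absurd (hv' j h) (by rw [hgood j hj hjK]; decide)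
    have hvI : ∀ (j : Fin N0) (hj : (j : ℕ) < n), (⟨(j : ℕ), hj⟩ : Fin n) ∉ I → v j = 0 :=
      fun j hj hjI => hvK j hj (fun hK => hjI (hKI hK))
    show g (mask0 h0 K v) = g (mask0 h0 I v)
    rw [mask0_eq_self h0 K v hvK, mask0_eq_self h0 I v hvI]
  · exfalso
    push_neg at hgood
    obtain ⟨j, hjn, hjK, hju⟩ := hgood
    have hju1 : u j = 1 := by
      rcases zmod2_cases (u j) with h | h
      · exact absurd h hju
      · exact h
    have h0' : anf (fun z => g (mask0 h0 K z)) u = 0 :=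
      anf_flip_zero u j hju1 _ fun v => by rw [mask0_update h0 K j hjn hjK]
    rw [h0'] at h1
    exact absurd h1 (by decide)

lemma vdeg_mask_mono {n m N0 : ℕ} (h0' : N0 = n + m) (K I : Finset (Fin n)) (hKI : K ⊆ I)
    (Jl : Finset (Fin N0))
    (g : (Fin N0 → ZMod 2) → ZMod 2) (w : ↥Jl → ZMod 2) :
    vdeg (fun z => g (mask0 h0' K z)) Jl w ≤ vdeg (fun z => g (mask0 h0' I z)) Jl w := by
  unfold vdeg
  refine deg_mono fun t ht => ?_
  rw [anf_coeffFun] at ht ⊢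
  exact anf_mask h0' K I hKI g _ ht

end MaskLemmas

lemma VDEG_mono {n : ℕ} {δ : Type*} [Fintype δ] [DecidableEq δ]
    (f : (Fin n → ZMod 2) → ZMod 2) (V V' : Fin n → (δ → ZMod 2) → WithBot ℤ)
    (hV : ∀ i x, V i x ≤ V' i x) (w : δ → ZMod 2) :
    VDEG f V w ≤ VDEG f V' w := by
  unfold VDEG
  refine Finset.sup_mono_fun fun p _ => ?_
  exact Finset.sum_le_sum fun i _ => hV i _

lemma Vt_mono {n m : ℕ} (n' : ℕ → ℕ) (h0 : n' 0 = n + m)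
    (f : ∀ t, (Fin (n' t) → ZMod 2) → (Fin (n' (t + 1)) → ZMod 2))
    (J K I : Finset (Fin n)) (hKI : K ⊆ I) :
    ∀ (t : ℕ) (i : Fin (n' (t + 1))) (w : ↥(liftJ h0 J) → ZMod 2),
      Vt n' h0 f J K t i w ≤ Vt n' h0 f J I t i w := by
  intro t
  induction t with
  | zero =>
    intro i w
    exact vdeg_mask_mono h0 K I hKI _ (fun z => f 0 z i) w
  | succ t ih =>
    intro i w
    exact VDEG_mono _ _ _ (fun i' x => ih i' x) w


/-- For `J ⊆ K ⊆ I`, the iterated estimated vector degrees satisfy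
`vdeg-hat^K ≼ vdeg-hat^I` (here `r = s + 2`). -/
theorem vdegHat_mono {n m : ℕ} (n' : ℕ → ℕ) (h0 : n' 0 = n + m)
    (s : ℕ) (hr : n' (s + 2) = 1)
    (f : ∀ t, (Fin (n' t) → ZMod 2) → (Fin (n' (t + 1)) → ZMod 2))
    (J K I : Finset (Fin n)) (hJK : J ⊆ K) (hKI : K ⊆ I) :
    ∀ w : ↥(liftJ h0 J) → ZMod 2,
      vdegHat n' h0 f J s K w ≤ vdegHat n' h0 f J s I w := by
  intro w
  exact VDEG_mono _ _ _ (fun i x => Vt_mono n' h0 f J K I hKI s i x) w
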